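/- Weighted L² bound for the Hankel transform of a complex Gaussian: let α > −1/2, s ≥ 0, and for a complex parameter z with Re z > 0 let e_z(λ) = exp(−zλ²) on (0,∞). Then the modified Hankel transform satisfies H_α(e_z)(x) = C_α z^{−(2α+1)/2} exp(−x²/(4z)), and for z = 1 − iy with y ∈ ℝ one has ∫_0^∞ |x^s H_α(e_{1−iy})(x)|² x^{2α} dx ≤ C_{α,s} (1+y²)^{s}. -/

import Mathlib

/-
Expanding the Bessel kernel in its power series, `H_α(e_z)(x)` becomes a series of Gaussian
moments `∫_0^∞ λ^{2m+2α} e^{-zλ²} dλ = Γ(m+α+1/2)/2 · z^{-(m+α+1/2)}`. For real `z > 0` this is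
Euler's integral; it extends to `Re z > 0` because the left side is the complex moment generating
function of `-λ²` under the measure `λ^{2m+2α} dλ`, hence holomorphic there. The Gamma factors
cancel against those of `J_{α-1/2}`, and what remains is the exponential series of `-x²/(4z)`.
For `z = 1 - iy` we get `|z| = (1+y²)^{1/2}` and `Re (1/z) = 1/(1+y²)`, so the weighted `L²` norm
is a real Gaussian moment, equal to an explicit constant times `(1+y²)^s`.
-/

open Real MeasureTheory

/-- Bessel function of the first kind of order `ν` (power series definition). -/
noncomputable def besselJ (ν x : ℝ) : ℝ :=
  ∑' m : ℕ, (-1) ^ m / (m.factorial * Real.Gamma (m + ν + 1)) *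
    (x / 2) ^ (2 * m) * (x / 2) ^ ν

/-- The one-dimensional modified Hankel transform
`H_α(g)(x) = ∫_0^∞ g(λ)(xλ)^{−α+1/2} J_{α−1/2}(xλ) λ^{2α} dλ`. -/
noncomputable def hankelTransform (α : ℝ) (g : ℝ → ℂ) (x : ℝ) : ℂ :=
  ∫ l in Set.Ioi (0 : ℝ),
    g l * (↑((x * l) ^ (-α + 1 / 2) * besselJ (α - 1 / 2) (x * l) * l ^ (2 * α)) : ℂ)

open Set Filter Topology ProbabilityTheory
open scoped Nat

theorem integral_rpow_mul_exp_neg_mul_sq {b c : ℝ} (hb : -1 < b) (hc : 0 < c) :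
    ∫ l in Ioi (0 : ℝ), l ^ b * exp (-c * l ^ 2) =
      c ^ (-(b + 1) / 2) * (1 / 2) * Gamma ((b + 1) / 2) := by
  simpa only [rpow_two] using integral_rpow_mul_exp_neg_mul_rpow two_pos hb hc

theorem ProbabilityTheory.eqOn_complexMGF_of_ofReal {Ω : Type*} {mΩ : MeasurableSpace Ω}
    {X : Ω → ℝ} {μ : Measure Ω} {I : Set ℝ} (hI : IsOpen I) (hI_convex : Convex ℝ I)
    (hI_sub : I ⊆ integrableExpSet X μ) {f : ℂ → ℂ} (hf : AnalyticOnNhd ℂ f {z | z.re ∈ I})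
    (h_eq : ∀ t ∈ I, complexMGF X μ t = f t) :
    EqOn (complexMGF X μ) f {z | z.re ∈ I} := by
  rcases I.eq_empty_or_nonempty with rfl | ⟨t, ht⟩
  · simp
  have hmgf : AnalyticOnNhd ℂ (complexMGF X μ) {z | z.re ∈ I} :=
    analyticOnNhd_complexMGF.mono fun z hz => interior_maximal hI_sub hI hz
  refine hmgf.eqOn_of_preconnected_of_frequently_eq hf
    (hI_convex.linear_preimage Complex.reLm).isPreconnected (z₀ := (t : ℂ)) (by simpa) ?_
  have h_real : ∃ᶠ u : ℝ in 𝓝[≠] t, complexMGF X μ u = f u :=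
    (eventually_nhdsWithin_of_eventually_nhds (hI.mem_nhds ht)).frequently.mono h_eq
  exact (Complex.continuous_ofReal.continuousWithinAt.tendsto_nhdsWithin
    fun u hu => by simpa using hu).frequently h_real

theorem integrableOn_rpow_mul_cexp_neg_mul_sq {b : ℝ} (hb : -1 < b) {z : ℂ} (hz : 0 < z.re) :
    IntegrableOn (fun l : ℝ => (↑(l ^ b) : ℂ) * Complex.exp (-z * l ^ 2)) (Ioi 0) := by
  refine (integrableOn_rpow_mul_exp_neg_mul_sq hz hb).mono' ?_ ?_
  · refine ContinuousOn.aestronglyMeasurable ?_ measurableSet_Ioi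
    exact (Complex.continuous_ofReal.comp_continuousOn
      (continuousOn_id.rpow_const fun l hl => Or.inl (ne_of_gt hl))).mul
      (by fun_prop)
  · refine (ae_restrict_iff' measurableSet_Ioi).2 (Eventually.of_forall fun l hl => ?_)
    rw [norm_mul, norm_cexp_neg_mul_sq, Complex.norm_real, norm_of_nonneg (rpow_nonneg hl.le b)]

theorem integral_rpow_mul_cexp_neg_mul_sq {b : ℝ} (hb : -1 < b) {z : ℂ} (hz : 0 < z.re) :
    ∫ l in Ioi (0 : ℝ), (↑(l ^ b) : ℂ) * Complex.exp (-z * l ^ 2) =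
      ↑(1 / 2 * Gamma ((b + 1) / 2)) * z ^ (-((b + 1) / 2 : ℝ) : ℂ) := by
  let μ := (volume.restrict (Ioi (0 : ℝ))).withDensity fun l => ((l ^ b).toNNReal : ENNReal)
  have hμ_meas : Measurable fun l : ℝ => (l ^ b).toNNReal := by fun_prop
  have hmgf (w : ℂ) : complexMGF (fun l => -l ^ 2) μ w =
      ∫ l in Ioi (0 : ℝ), (↑(l ^ b) : ℂ) * Complex.exp (-w * l ^ 2) := by
    rw [complexMGF, integral_withDensity_eq_integral_smul hμ_meas]
    refine setIntegral_congr_fun measurableSet_Ioi fun l hl => ?_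
    rw [NNReal.smul_def, Real.coe_toNNReal _ (rpow_nonneg (le_of_lt hl) b), Complex.real_smul]
    push_cast
    ring_nf
  have hI : Ioi 0 ⊆ integrableExpSet (fun l => -l ^ 2) μ := fun t ht => by
    refine (integrable_withDensity_iff_integrable_smul hμ_meas).2 ?_
    refine (integrableOn_rpow_mul_exp_neg_mul_sq ht hb).congr_fun (fun l hl => ?_)
      measurableSet_Ioi
    rw [NNReal.smul_def, Real.coe_toNNReal _ (rpow_nonneg (le_of_lt hl) b), smul_eq_mul]
    ring_nf
  have hf : AnalyticOnNhd ℂ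
      (fun w : ℂ => ↑(1 / 2 * Gamma ((b + 1) / 2)) * w ^ (-((b + 1) / 2 : ℝ) : ℂ))
      {w | w.re ∈ Ioi 0} := by
    refine DifferentiableOn.analyticOnNhd (fun w hw => ?_)
      (isOpen_lt continuous_const Complex.continuous_re)
    exact ((differentiableAt_id.cpow_const (Complex.mem_slitPlane_iff.2 (Or.inl hw))).const_mul
      _).differentiableWithinAt
  have h_real (t : ℝ) (ht : t ∈ Ioi 0) : complexMGF (fun l => -l ^ 2) μ t =
      ↑(1 / 2 * Gamma ((b + 1) / 2)) * (t : ℂ) ^ (-((b + 1) / 2 : ℝ) : ℂ) := by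
    have h_cast (l : ℝ) :
        (↑(l ^ b) : ℂ) * Complex.exp (-t * l ^ 2) = ↑(l ^ b * exp (-t * l ^ 2)) := by
      push_cast
      rfl
    simp_rw [hmgf, h_cast, integral_complex_ofReal, integral_rpow_mul_exp_neg_mul_sq hb ht,
      Complex.ofReal_mul, Complex.ofReal_cpow (le_of_lt ht)]
    push_cast
    ring_nf
  rw [← hmgf]
  exact eqOn_complexMGF_of_ofReal isOpen_Ioi (convex_Ioi 0) hI hf h_real hz

noncomputable def besselJCoeff (ν : ℝ) (m : ℕ) : ℝ := (-1) ^ m / (m ! * Gamma (m + ν + 1))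

noncomputable def hankelKernelCoeff (α x : ℝ) (m : ℕ) : ℝ :=
  besselJCoeff (α - 1 / 2) m * 2 ^ (-(α - 1 / 2)) * (x / 2) ^ (2 * m)

theorem rpow_neg_mul_besselJ {ν t : ℝ} (ht : 0 < t) :
    t ^ (-ν) * besselJ ν t = ∑' m : ℕ, besselJCoeff ν m * 2 ^ (-ν) * (t / 2) ^ (2 * m) := by
  have h_pow : t ^ (-ν) * (t / 2) ^ ν = 2 ^ (-ν) := by
    rw [div_rpow ht.le zero_le_two, rpow_neg ht.le, rpow_neg zero_le_two]
    field_simp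
  rw [besselJ, ← tsum_mul_left]
  refine tsum_congr fun m => ?_
  rw [besselJCoeff, ← h_pow]
  ring

theorem hankelKernel_eq_tsum (α : ℝ) {x l : ℝ} (hx : 0 < x) (hl : 0 < l) :
    (x * l) ^ (-α + 1 / 2) * besselJ (α - 1 / 2) (x * l) * l ^ (2 * α) =
      ∑' m : ℕ, hankelKernelCoeff α x m * l ^ (2 * m + 2 * α) := by
  rw [show -α + 1 / 2 = -(α - 1 / 2) by ring, rpow_neg_mul_besselJ (mul_pos hx hl),
    ← tsum_mul_right]
  refine tsum_congr fun m => ?_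
  rw [hankelKernelCoeff, rpow_add hl, show 2 * (m : ℝ) = (2 * m : ℕ) by push_cast; ring,
    rpow_natCast, mul_div_right_comm, mul_pow]
  ring

theorem integral_hankelKernelCoeff_mul_cexp {α : ℝ} (hα : -(1 / 2) < α) {z : ℂ} (hz : 0 < z.re)
    (x : ℝ) (m : ℕ) :
    ∫ l in Ioi (0 : ℝ),
        ↑(hankelKernelCoeff α x m) * (↑(l ^ (2 * m + 2 * α)) * Complex.exp (-z * l ^ 2)) =
      ↑((2 : ℝ) ^ (-((2 * α + 1) / 2))) * z ^ (-((2 * α + 1) / 2 : ℝ) : ℂ) *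
        ((-(x : ℂ) ^ 2 / (4 * z)) ^ m / m !) := by
  set β : ℝ := (2 * α + 1) / 2 with hβ
  have hβ_pos : 0 < β := by linarith
  have hz0 : z ≠ 0 := fun h => by simp [h] at hz
  have hΓ : (Gamma (m + β) : ℂ) ≠ 0 :=
    Complex.ofReal_ne_zero.2 (Gamma_pos_of_pos (by positivity)).ne'
  have h_exp : (2 * m + 2 * α + 1) / 2 = m + β := by ring
  have h_two : (2 : ℝ) ^ (-(α - 1 / 2)) = 2 * 2 ^ (-β) := by
    rw [show -(α - 1 / 2) = 1 + -β by rw [hβ]; ring, rpow_add two_pos, rpow_one]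
  have h_zpow : z ^ (-(m + β : ℝ) : ℂ) = z ^ (-β : ℂ) / z ^ m := by
    rw [show (-(m + β : ℝ) : ℂ) = -β + -(m : ℂ) by push_cast; ring, Complex.cpow_add _ _ hz0,
      Complex.cpow_neg z m, Complex.cpow_natCast, div_eq_mul_inv]
  have h_w : (-(x : ℂ) ^ 2 / (4 * z)) ^ m = (-1) ^ m * ((x : ℂ) / 2) ^ (2 * m) / z ^ m := by
    rw [pow_mul, ← mul_pow, ← div_pow]
    ring
  rw [integral_const_mul,
    integral_rpow_mul_cexp_neg_mul_sq (by linarith [(m.cast_nonneg : (0 : ℝ) ≤ m)]) hz, h_exp,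
    h_zpow, hankelKernelCoeff, besselJCoeff, show (m : ℝ) + (α - 1 / 2) + 1 = m + β by ring,
    h_two, h_w]
  push_cast
  field_simp

theorem hankelTransform_gaussian {α : ℝ} (hα : -(1 / 2) < α) {z : ℂ} (hz : 0 < z.re) {x : ℝ}
    (hx : 0 < x) :
    hankelTransform α (fun l : ℝ => Complex.exp (-z * (l : ℂ) ^ 2)) x =
      ↑((2 : ℝ) ^ (-((2 * α + 1) / 2))) * z ^ (-((2 * α + 1) / 2 : ℝ) : ℂ) *
        Complex.exp (-(x : ℂ) ^ 2 / (4 * z)) := by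
  set F : ℂ → ℕ → ℝ → ℂ := fun w m l =>
    ↑(hankelKernelCoeff α x m) * (↑(l ^ (2 * m + 2 * α)) * Complex.exp (-w * l ^ 2))
  have hb (m : ℕ) : -1 < 2 * (m : ℝ) + 2 * α := by linarith [(m.cast_nonneg : (0 : ℝ) ≤ m)]
  have h_series (l : ℝ) (hl : l ∈ Ioi 0) :
      Complex.exp (-z * l ^ 2) *
        ↑((x * l) ^ (-α + 1 / 2) * besselJ (α - 1 / 2) (x * l) * l ^ (2 * α)) = ∑' m, F z m l := by
    rw [hankelKernel_eq_tsum α hx hl, Complex.ofReal_tsum, ← tsum_mul_left]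
    refine tsum_congr fun m => ?_
    simp only [F]
    push_cast
    ring
  have h_int (m : ℕ) : Integrable (F z m) (volume.restrict (Ioi 0)) :=
    (integrableOn_rpow_mul_cexp_neg_mul_sq (hb m) hz).const_mul _
  -- `‖F z m‖ = ‖F (re z) m‖` pointwise, and `F (re z) m` is real of constant sign.
  have h_norm (m : ℕ) : ∫ l in Ioi (0 : ℝ), ‖F z m l‖ = ‖∫ l in Ioi (0 : ℝ), F z.re m l‖ := by
    have h_nonneg : 0 ≤ ∫ l in Ioi (0 : ℝ), l ^ (2 * m + 2 * α) * exp (-z.re * l ^ 2) :=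
      setIntegral_nonneg measurableSet_Ioi fun l hl =>
        mul_nonneg (rpow_nonneg (le_of_lt hl) _) (exp_pos _).le
    calc _ = ∫ l in Ioi (0 : ℝ),
            ‖hankelKernelCoeff α x m‖ * (l ^ (2 * m + 2 * α) * exp (-z.re * l ^ 2)) := by
          refine setIntegral_congr_fun measurableSet_Ioi fun l hl => ?_
          rw [norm_mul, norm_mul, norm_cexp_neg_mul_sq, Complex.norm_real, Complex.norm_real,
            norm_of_nonneg (rpow_nonneg (le_of_lt hl) _)]
      _ = ‖(hankelKernelCoeff α x m : ℂ) *
            ↑(∫ l in Ioi (0 : ℝ), l ^ (2 * m + 2 * α) * exp (-z.re * l ^ 2))‖ := by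
        rw [integral_const_mul, norm_mul, Complex.norm_real, Complex.norm_real,
          norm_of_nonneg h_nonneg]
      _ = _ := by
        rw [← integral_complex_ofReal, ← integral_const_mul]
        push_cast
        rfl
  have h_sum : Summable fun m => ∫ l in Ioi (0 : ℝ), ‖F z m l‖ := by
    simp only [h_norm, F]
    simp_rw [integral_hankelKernelCoeff_mul_cexp hα (by simpa using hz : 0 < (z.re : ℂ).re),
      norm_mul, norm_div, norm_pow, Complex.norm_natCast]
    exact (Real.summable_pow_div_factorial _).mul_left _
  rw [hankelTransform, setIntegral_congr_fun measurableSet_Ioi h_series,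
    ← integral_tsum_of_summable_integral_norm h_int h_sum]
  simp only [F]
  simp_rw [integral_hankelKernelCoeff_mul_cexp hα hz, tsum_mul_left]
  rw [Complex.exp_eq_exp_ℂ, NormedSpace.exp_eq_tsum_div]

theorem norm_hankelTransform_gaussian_one_sub_I_mul {α : ℝ} (hα : -(1 / 2) < α) (y : ℝ) {x : ℝ}
    (hx : 0 < x) :
    ‖hankelTransform α (fun l : ℝ => Complex.exp (-(1 - Complex.I * y) * (l : ℂ) ^ 2)) x‖ =
      2 ^ (-((2 * α + 1) / 2)) * (1 + y ^ 2) ^ (-((2 * α + 1) / 4)) *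
        exp (-x ^ 2 / (4 * (1 + y ^ 2))) := by
  have h_norm : ‖1 - Complex.I * y‖ = √(1 + y ^ 2) := by
    rw [Complex.norm_def, Complex.normSq_apply]
    congr 1
    simp
    ring
  have h_re : (-(x : ℂ) ^ 2 / (4 * (1 - Complex.I * y))).re = -x ^ 2 / (4 * (1 + y ^ 2)) := by
    simp [Complex.div_re, Complex.normSq_apply, ← Complex.ofReal_pow]
    field_simp
  rw [hankelTransform_gaussian hα (by simp) hx, norm_mul, norm_mul, Complex.norm_real,
    norm_of_nonneg (by positivity), ← Complex.ofReal_neg, Complex.norm_cpow_real, h_norm,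
    Complex.norm_exp, h_re, sqrt_eq_rpow, ← rpow_mul (by positivity)]
  ring_nf

theorem integral_sq_rpow_mul_norm_hankelTransform_gaussian {α s : ℝ} (hα : -(1 / 2) < α)
    (hs : 0 ≤ s) (y : ℝ) :
    ∫ x in Ioi (0 : ℝ),
        (x ^ s * ‖hankelTransform α
          (fun l : ℝ => Complex.exp (-(1 - Complex.I * y) * (l : ℂ) ^ 2)) x‖) ^ 2 * x ^ (2 * α) =
      2 ^ (s - (2 * α + 1) / 2 - 1) * Gamma (s + (2 * α + 1) / 2) * (1 + y ^ 2) ^ s := by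
  set T := 1 + y ^ 2 with hT_def
  have hT : 0 < T := by positivity
  have h_pt (x : ℝ) (hx : x ∈ Ioi 0) :
      (x ^ s * ‖hankelTransform α
          (fun l : ℝ => Complex.exp (-(1 - Complex.I * y) * (l : ℂ) ^ 2)) x‖) ^ 2 * x ^ (2 * α) =
        2 ^ (-(2 * α + 1)) * T ^ (-((2 * α + 1) / 2)) *
          (x ^ (2 * s + 2 * α) * exp (-(1 / (2 * T)) * x ^ 2)) := by
    rw [norm_hankelTransform_gaussian_one_sub_I_mul hα y hx, ← hT_def, mul_pow, mul_pow,
      mul_pow, ← rpow_mul_natCast (le_of_lt hx), ← rpow_mul_natCast zero_le_two,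
      ← rpow_mul_natCast hT.le, ← exp_nat_mul, rpow_add hx]
    ring_nf
  rw [setIntegral_congr_fun measurableSet_Ioi h_pt, integral_const_mul,
    integral_rpow_mul_exp_neg_mul_sq (by linarith) (by positivity), one_div,
    inv_rpow (by positivity), ← rpow_neg (by positivity), mul_rpow zero_le_two hT.le]
  have h_two : (2 : ℝ) ^ (s - (2 * α + 1) / 2 - 1) =
      2 ^ (-(2 * α + 1)) * 2 ^ (-(-(2 * s + 2 * α + 1) / 2)) / 2 := by
    rw [← rpow_add two_pos, ← rpow_sub_one two_ne_zero]
    congr 1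
    ring
  have h_T : T ^ s = T ^ (-((2 * α + 1) / 2)) * T ^ (-(-(2 * s + 2 * α + 1) / 2)) := by
    rw [← rpow_add hT]
    congr 1
    ring
  rw [h_two, h_T, show (2 * s + 2 * α + 1) / 2 = s + (2 * α + 1) / 2 by ring]
  ring

/-- For `α > −1/2`, `H_α(e_z)(x) = C_α z^{−(2α+1)/2} exp(−x²/(4z))` for `Re z > 0`,
and for `z = 1−iy` the weighted `L²` bound
`∫_0^∞ |x^s H_α(e_{1−iy})(x)|² x^{2α} dx ≤ C_{α,s}(1+y²)^s` holds. -/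
theorem stmt_19 (α s : ℝ) (hα : -(1 / 2 : ℝ) < α) (hs : 0 ≤ s) :
    ∃ C : ℂ, ∃ C' : ℝ, 0 < C' ∧
      (∀ z : ℂ, 0 < z.re → ∀ x : ℝ, 0 < x →
        hankelTransform α (fun l : ℝ => Complex.exp (-z * (l : ℂ) ^ 2)) x
          = C * z ^ (-(((2 * α + 1) / 2 : ℝ)) : ℂ) *
              Complex.exp (-(x : ℂ) ^ 2 / (4 * z))) ∧
      ∀ y : ℝ,
        ∫ x in Set.Ioi (0 : ℝ),
          (x ^ s * ‖
            (hankelTransform α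
              (fun l : ℝ => Complex.exp (-(1 - Complex.I * (y : ℂ)) * (l : ℂ) ^ 2))
              x)‖) ^ 2 * x ^ (2 * α)
          ≤ C' * (1 + y ^ 2) ^ s := by
  refine ⟨↑((2 : ℝ) ^ (-((2 * α + 1) / 2))),
    2 ^ (s - (2 * α + 1) / 2 - 1) * Gamma (s + (2 * α + 1) / 2),
    mul_pos (by positivity) (Gamma_pos_of_pos (by linarith)),
    fun z hz x hx => hankelTransform_gaussian hα hz hx,
    fun y => (integral_sq_rpow_mul_norm_hankelTransform_gaussian hα hs y).le⟩
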